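/- Fix a rooted forest T on a finite vertex set V and a set N ⊆ V. For every vertex u, the maximum score satisfies the recursion s(u) = ε(u) + max( Σ_{c child of u} max(cc(c), 0) , max_{c child of u} s(c) ), where ε(u) = 1 if u ∈ N and ε(u) = −1 otherwise, and the inner maximum over children is omitted (taken as the first term alone) when u has no children. In particular, for a leaf u, s(u) = ε(u). -/
import Mathlib


open scoped Classical

/-- `u` is a strict ancestor of `w`: `u` is obtained from `w` by iterating the
parent assignment `p` at least once (and `u ≠ w`). -/
def StrictAnc {V : Type*} (p : V → V) (u w : V) : Prop :=
  u ≠ w ∧ ∃ k : ℕ, p^[k + 1] w = u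

/-- `p` is the parent assignment of a rooted forest: iterating `p` from any
vertex reaches a root (a fixed point of `p`), so there are no cycles. -/
def IsRootedForest {V : Type*} (p : V → V) : Prop :=
  ∀ v : V, ∃ n : ℕ, p^[n + 1] v = p^[n] v

/-- The subtree of `u`: all vertices having `u` as ancestor-or-equal. -/
def subtree {V : Type*} (p : V → V) (u : V) : Set V :=
  {w | u = w ∨ StrictAnc p u w}

/-- The children of `u` in the forest. -/
def children {V : Type*} (p : V → V) (u : V) : Set V :=
  {c | p c = u ∧ c ≠ u}

/-- Child closeness of `w` w.r.t. the neighbour set `N`: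
`|subtree(w) ∩ N| − |subtree(w) \ N|`. -/
noncomputable def cc {V : Type*} (p : V → V) (N : Set V) (w : V) : ℤ :=
  ((subtree p w ∩ N).ncard : ℤ) - ((subtree p w \ N).ncard : ℤ)

/-- `S(u, C)`: the union of `{u}`, the strict ancestors of `u`, and the
subtrees of the children in `C`. -/
def editSet {V : Type*} (p : V → V) (u : V) (C : Set V) : Set V :=
  insert u ({x | StrictAnc p x u} ∪ ⋃ c ∈ C, subtree p c)

/-- The edit cost `cost(u, C) = |S(u,C) \ N| + |N \ S(u,C)|`. -/
noncomputable def cost {V : Type*} (p : V → V) (N : Set V) (u : V) (C : Set V) : ℕ :=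
  (editSet p u C \ N).ncard + (N \ editSet p u C).ncard

/-- The vertex set of the tree path from `u` down to `w` (both inclusive):
all `x` with `u` ancestor-or-equal of `x` and `x` ancestor-or-equal of `w`. -/
def pathSet {V : Type*} (p : V → V) (u w : V) : Set V :=
  {x | (u = x ∨ StrictAnc p u x) ∧ (x = w ∨ StrictAnc p x w)}

/-- `X(u, w, C)`: the union of the tree path from `u` down to `w` and the
subtrees of the children in `C`. -/
def pathUnion {V : Type*} (p : V → V) (u w : V) (C : Set V) : Set V :=
  pathSet p u w ∪ ⋃ c ∈ C, subtree p c

/-- The maximum score `s(u)`: the maximum, over all vertices `w` in the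
subtree of `u` and all sets `C` of children of `w`, of
`|X ∩ N| − |X \ N|` where `X = pathUnion p u w C`. -/
noncomputable def maxScore {V : Type*} (p : V → V) (N : Set V) (u : V) : ℤ :=
  sSup {z : ℤ | ∃ w ∈ subtree p u, ∃ C ⊆ children p w,
    z = ((pathUnion p u w C ∩ N).ncard : ℤ) - ((pathUnion p u w C \ N).ncard : ℤ)}

/-- The children of `u` as a finset. -/
def childrenFinset {V : Type*} [Fintype V] [DecidableEq V] (p : V → V) (u : V) : Finset V :=
  Finset.univ.filter fun c => p c = u ∧ c ≠ u

def anc {V : Type*} (p : V → V) (u w : V) : Prop := ∃ k, p^[k] w = u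

lemma or_strictAnc_iff_anc {V : Type*} {p : V → V} {u w : V} :
    (u = w ∨ StrictAnc p u w) ↔ anc p u w := by
  constructor
  · rintro (rfl | ⟨hne, k, hk⟩)
    · exact ⟨0, rfl⟩
    · exact ⟨k + 1, hk⟩
  · rintro ⟨k, hk⟩
    cases k with
    | zero => exact Or.inl hk.symm
    | succ k =>
      by_cases h : u = w
      · exact Or.inl h
      · exact Or.inr ⟨h, k, hk⟩

lemma mem_subtree_iff {V : Type*} {p : V → V} {u w : V} :
    w ∈ subtree p u ↔ anc p u w := or_strictAnc_iff_anc

lemma anc_refl {V : Type*} (p : V → V) (u : V) : anc p u u := ⟨0, rfl⟩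

lemma anc_trans {V : Type*} {p : V → V} {u x w : V} (h1 : anc p u x) (h2 : anc p x w) :
    anc p u w := by
  obtain ⟨a, ha⟩ := h1; obtain ⟨b, hb⟩ := h2
  exact ⟨a + b, by rw [Function.iterate_add_apply, hb, ha]⟩

lemma periodic_fixed {V : Type*} {p : V → V} (hp : IsRootedForest p) {x : V} {d : ℕ}
    (hd : 1 ≤ d) (h : p^[d] x = x) : p x = x := by
  obtain ⟨n, hn⟩ := hp x
  have hfix : p (p^[n] x) = p^[n] x :=
    (Function.iterate_succ_apply' p n x).symm.trans hn
  have hstab : ∀ m, p^[n + m] x = p^[n] x := by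
    intro m
    rw [Nat.add_comm, Function.iterate_add_apply]
    exact Function.iterate_fixed hfix m
  have hper : ∀ j, p^[d * j] x = x := by
    intro j
    rw [Function.iterate_mul]
    exact Function.iterate_fixed h j
  have h1 : p^[d * n + d] x = x := by rw [← Nat.mul_succ]; exact hper (n + 1)
  have h2 : p^[d * n + d] x = p^[n] x := by
    have hnle : n ≤ d * n := Nat.le_mul_of_pos_left n hd
    have : d * n + d = n + (d * n + d - n) := by omega
    rw [this]; exact hstab _
  have hx : x = p^[n] x := h1.symm.trans h2
  calc p x = p (p^[n] x) := by rw [← hx]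
    _ = p^[n + 1] x := (Function.iterate_succ_apply' p n x).symm
    _ = p^[n] x := hn
    _ = x := hx.symm

lemma anc_antisymm {V : Type*} {p : V → V} (hp : IsRootedForest p) {u w : V}
    (h1 : anc p u w) (h2 : anc p w u) : u = w := by
  obtain ⟨a, ha⟩ := h1; obtain ⟨b, hb⟩ := h2
  rcases Nat.eq_zero_or_pos (b + a) with h | h
  · obtain ⟨hb0, ha0⟩ : b = 0 ∧ a = 0 := by omega
    subst hb0; subst ha0; simpa using ha.symm
  · have hcyc : p^[b + a] w = w := by
      rw [Function.iterate_add_apply, ha, hb]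
    have := periodic_fixed hp h hcyc
    rw [← ha]
    exact (Function.iterate_fixed this a)

lemma anc_of_child {V : Type*} {p : V → V} {u c : V} (hc : c ∈ children p u) :
    anc p u c := ⟨1, hc.1⟩

lemma not_anc_child_of_parent {V : Type*} {p : V → V} (hp : IsRootedForest p)
    {u c : V} (hc : c ∈ children p u) : ¬ anc p c u := by
  rintro ⟨j, hj⟩
  have hcyc : p^[j + 1] u = u := by
    rw [Function.iterate_succ_apply', hj, hc.1]
  have hfix := periodic_fixed hp (by omega) hcyc
  exact hc.2 (by rw [← hj, Function.iterate_fixed hfix])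

lemma subtree_subset_of_anc {V : Type*} {p : V → V} {u w : V} (h : anc p u w) :
    subtree p w ⊆ subtree p u := by
  intro x hx
  rw [mem_subtree_iff] at hx ⊢
  exact anc_trans h hx

-- decomposition: a strict descendant lies in the subtree of some child

lemma exists_child_of_mem_subtree {V : Type*} {p : V → V}
    {u w : V} (hw : anc p u w) (hne : w ≠ u) :
    ∃ c ∈ children p u, anc p c w := by
  obtain ⟨k, hk⟩ := hw
  have hex : ∃ m, p^[m + 1] w = u := by
    cases k with
    | zero => exact absurd (by simpa using hk) hne
    | succ k => exact ⟨k, hk⟩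
  classical
  let m := Nat.find hex
  have hm : p^[m + 1] w = u := Nat.find_spec hex
  refine ⟨p^[m] w, ⟨?_, ?_⟩, ⟨m, rfl⟩⟩
  · exact (Function.iterate_succ_apply' p m w).symm.trans hm
  · intro heq
    cases hmz : m with
    | zero =>
      rw [hmz] at heq; simp at heq; exact hne heq
    | succ m' =>
      have : p^[m' + 1] w = u := by rw [← heq, hmz]
      exact Nat.find_min hex (by omega : m' < m) this

-- comparability of two ancestors of the same vertex

lemma anc_comparable {V : Type*} {p : V → V} {x a b : V}
    (h1 : anc p a x) (h2 : anc p b x) : anc p a b ∨ anc p b a := by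
  obtain ⟨i, hi⟩ := h1; obtain ⟨j, hj⟩ := h2
  rcases le_total i j with h | h
  · right
    refine ⟨j - i, ?_⟩
    rw [← hi, ← Function.iterate_add_apply]
    rw [show j - i + i = j by omega]; exact hj
  · left
    refine ⟨i - j, ?_⟩
    rw [← hj, ← Function.iterate_add_apply]
    rw [show i - j + j = i by omega]; exact hi

lemma children_subtree_disjoint {V : Type*} {p : V → V} (hp : IsRootedForest p)
    {u c₁ c₂ : V} (h1 : c₁ ∈ children p u) (h2 : c₂ ∈ children p u) (hne : c₁ ≠ c₂) :
    Disjoint (subtree p c₁) (subtree p c₂) := by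
  rw [Set.disjoint_left]
  intro x hx1 hx2
  rw [mem_subtree_iff] at hx1 hx2
  have key : ∀ a b : V, a ∈ children p u → b ∈ children p u → a ≠ b → anc p a b → False := by
    rintro a b ha hb hab ⟨k, hk⟩
    cases k with
    | zero => exact hab hk.symm
    | succ k =>
      have : p^[k] u = a := by
        rw [← hk, Function.iterate_succ_apply, hb.1]
      exact not_anc_child_of_parent hp ha ⟨k, this⟩
  rcases anc_comparable hx1 hx2 with h | h
  · exact key c₁ c₂ h1 h2 hne h
  · exact key c₂ c₁ h2 h1 hne.symm h

lemma not_mem_subtree_child {V : Type*} {p : V → V} (hp : IsRootedForest p)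
    {u c : V} (hc : c ∈ children p u) : u ∉ subtree p c := by
  rw [mem_subtree_iff]
  exact not_anc_child_of_parent hp hc

lemma mem_pathSet_iff {V : Type*} {p : V → V} {u w x : V} :
    x ∈ pathSet p u w ↔ anc p u x ∧ anc p x w := by
  unfold pathSet
  rw [Set.mem_setOf_eq, or_strictAnc_iff_anc, or_strictAnc_iff_anc]

lemma pathSet_self {V : Type*} {p : V → V} (hp : IsRootedForest p) (u : V) :
    pathSet p u u = {u} := by
  ext x
  rw [mem_pathSet_iff, Set.mem_singleton_iff]
  constructor
  · rintro ⟨h1, h2⟩; exact (anc_antisymm hp h1 h2).symm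
  · rintro rfl; exact ⟨anc_refl p x, anc_refl p x⟩

lemma pathSet_split {V : Type*} {p : V → V} (hp : IsRootedForest p)
    {u c₀ w : V} (hc : c₀ ∈ children p u) (hw : anc p c₀ w) :
    pathSet p u w = insert u (pathSet p c₀ w) := by
  have hucw : anc p u w := anc_trans (anc_of_child hc) hw
  ext x
  rw [mem_pathSet_iff, Set.mem_insert_iff, mem_pathSet_iff]
  constructor
  · rintro ⟨h1, h2⟩
    by_cases hx : x = u
    · exact Or.inl hx
    · right
      obtain ⟨c', hc', hc'x⟩ := exists_child_of_mem_subtree h1 hx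
      have hcc : c' = c₀ := by
        by_contra hne
        have hd := children_subtree_disjoint hp hc' hc hne
        rw [Set.disjoint_left] at hd
        exact hd (mem_subtree_iff.mpr (anc_trans hc'x h2)) (mem_subtree_iff.mpr hw)
      exact ⟨hcc ▸ hc'x, h2⟩
  · rintro (rfl | ⟨h1, h2⟩)
    · exact ⟨anc_refl p x, hucw⟩
    · exact ⟨anc_trans (anc_of_child hc) h1, h2⟩

lemma biUnion_subtree_subset {V : Type*} {p : V → V} {w : V} {C : Set V}
    (hC : C ⊆ children p w) : (⋃ c ∈ C, subtree p c) ⊆ subtree p w := by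
  intro x hx
  simp only [Set.mem_iUnion] at hx
  obtain ⟨c, hcC, hxc⟩ := hx
  exact subtree_subset_of_anc (anc_of_child (hC hcC)) hxc

lemma pathUnion_subset_subtree {V : Type*} {p : V → V} {u w : V} {C : Set V}
    (hw : anc p u w) (hC : C ⊆ children p w) : pathUnion p u w C ⊆ subtree p u := by
  intro x hx
  rcases hx with hx | hx
  · exact mem_subtree_iff.mpr (mem_pathSet_iff.mp hx).1
  · exact subtree_subset_of_anc hw (biUnion_subtree_subset hC hx)

lemma pathUnion_self {V : Type*} {p : V → V} (hp : IsRootedForest p) (u : V) (C : Set V) :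
    pathUnion p u u C = insert u (⋃ c ∈ C, subtree p c) := by
  rw [pathUnion, pathSet_self hp, Set.singleton_union]

lemma pathUnion_split {V : Type*} {p : V → V} (hp : IsRootedForest p)
    {u c₀ w : V} (hc : c₀ ∈ children p u) (hw : anc p c₀ w) (C : Set V) :
    pathUnion p u w C = insert u (pathUnion p c₀ w C) := by
  rw [pathUnion, pathSet_split hp hc hw, Set.insert_union, pathUnion]

lemma not_mem_pathUnion {V : Type*} {p : V → V} (hp : IsRootedForest p)
    {u c₀ w : V} (hc : c₀ ∈ children p u) (hw : anc p c₀ w) {C : Set V}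
    (hC : C ⊆ children p w) : u ∉ pathUnion p c₀ w C := by
  intro hmem
  exact not_mem_subtree_child hp hc (pathUnion_subset_subtree hw hC hmem)

lemma not_mem_biUnion {V : Type*} {p : V → V} (hp : IsRootedForest p)
    {u : V} {C : Set V} (hC : C ⊆ children p u) : u ∉ ⋃ c ∈ C, subtree p c := by
  intro hmem
  simp only [Set.mem_iUnion] at hmem
  obtain ⟨c, hcC, hxc⟩ := hmem
  exact not_mem_subtree_child hp (hC hcC) hxc

-- the score function

noncomputable def sc {V : Type*} (N X : Set V) : ℤ :=
  ((X ∩ N).ncard : ℤ) - ((X \ N).ncard : ℤ)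

lemma sc_empty {V : Type*} (N : Set V) : sc N ∅ = 0 := by simp [sc]

lemma sc_union_disjoint {V : Type*} [Fintype V] {N X Y : Set V} (h : Disjoint X Y) :
    sc N (X ∪ Y) = sc N X + sc N Y := by
  unfold sc
  rw [Set.union_inter_distrib_right, Set.union_diff_distrib,
    Set.ncard_union_eq (h.mono Set.inter_subset_left Set.inter_subset_left)
      (Set.toFinite _) (Set.toFinite _),
    Set.ncard_union_eq (h.mono Set.diff_subset Set.diff_subset)
      (Set.toFinite _) (Set.toFinite _)]
  push_cast; ring

lemma sc_singleton {V : Type*} (N : Set V) (x : V) :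
    sc N {x} = if x ∈ N then 1 else -1 := by
  by_cases hx : x ∈ N
  · simp [sc, hx, Set.singleton_inter_eq_empty.mpr, Set.inter_eq_self_of_subset_left,
      Set.singleton_subset_iff.mpr hx, Set.diff_eq_empty.mpr (Set.singleton_subset_iff.mpr hx)]
  · have h1 : ({x} : Set V) ∩ N = ∅ := by
      rw [Set.singleton_inter_eq_empty]; exact hx
    have h2 : ({x} : Set V) \ N = {x} := by
      ext y
      simp only [Set.mem_diff, Set.mem_singleton_iff]
      exact ⟨fun h => h.1, fun h => ⟨h, h ▸ hx⟩⟩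
    simp [sc, h1, h2, if_neg hx]

lemma sc_insert {V : Type*} [Fintype V] {N X : Set V} {x : V} (hx : x ∉ X) :
    sc N (insert x X) = (if x ∈ N then 1 else -1) + sc N X := by
  rw [← Set.singleton_union, sc_union_disjoint (Set.disjoint_singleton_left.mpr hx),
    sc_singleton]

lemma cc_eq_sc {V : Type*} (p : V → V) (N : Set V) (w : V) :
    cc p N w = sc N (subtree p w) := rfl

lemma mem_childrenFinset {V : Type*} [Fintype V] [DecidableEq V] {p : V → V} {u c : V} :
    c ∈ childrenFinset p u ↔ c ∈ children p u := by
  simp [childrenFinset, children, Set.mem_setOf_eq]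

lemma sc_biUnion_children {V : Type*} [Fintype V] {p : V → V} (hp : IsRootedForest p)
    (N : Set V) {u : V} (s : Finset V) (hs : ∀ c ∈ s, c ∈ children p u) :
    sc N (⋃ c ∈ (s : Set V), subtree p c) = ∑ c ∈ s, cc p N c := by
  classical
  induction s using Finset.induction_on with
  | empty => simp [sc_empty]
  | @insert a s ha ih =>
    have hs' : ∀ c ∈ s, c ∈ children p u := fun c hc => hs c (Finset.mem_insert_of_mem hc)
    have hau : a ∈ children p u := hs a (Finset.mem_insert_self a s)
    have hdisj : Disjoint (subtree p a) (⋃ c ∈ (s : Set V), subtree p c) := by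
      rw [Set.disjoint_right]
      intro x hx
      simp only [Set.mem_iUnion] at hx
      obtain ⟨c, hcs, hxc⟩ := hx
      have hne : c ≠ a := fun h => ha (h ▸ hcs)
      have := children_subtree_disjoint hp (hs' c hcs) hau hne
      rw [Set.disjoint_left] at this
      exact this hxc
    rw [Finset.coe_insert, Set.biUnion_insert, sc_union_disjoint hdisj,
      Finset.sum_insert ha, ih hs', cc_eq_sc]

def Sset {V : Type*} (p : V → V) (N : Set V) (u : V) : Set ℤ :=
  {z : ℤ | ∃ w ∈ subtree p u, ∃ C ⊆ children p w, z = sc N (pathUnion p u w C)}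

lemma maxScore_eq_sSup_Sset {V : Type*} (p : V → V) (N : Set V) (u : V) :
    maxScore p N u = sSup (Sset p N u) := rfl

lemma Sset_finite {V : Type*} [Fintype V] (p : V → V) (N : Set V) (u : V) :
    (Sset p N u).Finite := by
  apply Set.Finite.subset (Set.finite_range (sc N))
  rintro z ⟨w, _, C, _, rfl⟩
  exact ⟨pathUnion p u w C, rfl⟩

lemma Sset_nonempty {V : Type*} (p : V → V) (N : Set V) (u : V) :
    (Sset p N u).Nonempty :=
  ⟨sc N (pathUnion p u u ∅), u, Or.inl rfl, ∅, Set.empty_subset _, rfl⟩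

lemma maxScore_mem_Sset {V : Type*} [Fintype V] (p : V → V) (N : Set V) (u : V) :
    maxScore p N u ∈ Sset p N u := by
  rw [maxScore_eq_sSup_Sset]
  exact Set.Nonempty.csSup_mem (Sset_nonempty p N u) (Sset_finite p N u)

lemma le_maxScore {V : Type*} [Fintype V] {p : V → V} {N : Set V} {u : V} {z : ℤ}
    (hz : z ∈ Sset p N u) : z ≤ maxScore p N u :=
  le_csSup (Set.Finite.bddAbove (Sset_finite p N u)) hz

theorem maxScore_recursion_aux {V : Type*} [Fintype V] [DecidableEq V]
    (p : V → V) (hp : IsRootedForest p) (N : Set V) (u : V) :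
    (children p u = ∅ → maxScore p N u = (if u ∈ N then (1 : ℤ) else -1)) ∧
    (children p u ≠ ∅ →
      maxScore p N u = (if u ∈ N then (1 : ℤ) else -1) +
        max (∑ c ∈ childrenFinset p u, max (cc p N c) 0)
          (sSup {z : ℤ | ∃ c ∈ children p u, z = maxScore p N c})) := by
  set ε : ℤ := if u ∈ N then 1 else -1 with hε
  constructor
  · -- leaf case
    intro hleaf
    have hsub : subtree p u = {u} := by
      ext w
      rw [mem_subtree_iff, Set.mem_singleton_iff]
      constructor
      · intro hw
        by_contra hne
        obtain ⟨c, hc, _⟩ := exists_child_of_mem_subtree hw hne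
        rw [hleaf] at hc
        exact hc
      · rintro rfl; exact anc_refl p w
    have hSset : Sset p N u = {ε} := by
      ext z
      constructor
      · rintro ⟨w, hw, C, hC, rfl⟩
        rw [hsub, Set.mem_singleton_iff] at hw
        subst hw
        have hCe : C = ∅ := by
          rw [hleaf] at hC
          exact Set.subset_empty_iff.mp hC
        subst hCe
        have hbot : (⋃ c ∈ (∅ : Set V), subtree p c) = ∅ := by simp
        rw [Set.mem_singleton_iff, pathUnion_self hp, hbot,
          sc_insert (Set.notMem_empty _), sc_empty, add_zero, hε]
      · rintro rfl
        refine ⟨u, Or.inl rfl, ∅, Set.empty_subset _, ?_⟩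
        have hbot : (⋃ c ∈ (∅ : Set V), subtree p c) = ∅ := by simp
        rw [pathUnion_self hp, hbot, sc_insert (Set.notMem_empty _), sc_empty,
          add_zero, hε]
    rw [maxScore_eq_sSup_Sset, hSset, csSup_singleton]
  · -- internal case
    intro hne
    set A : ℤ := ∑ c ∈ childrenFinset p u, max (cc p N c) 0 with hA
    set Bs : Set ℤ := {z : ℤ | ∃ c ∈ children p u, z = maxScore p N c} with hBs
    set B : ℤ := sSup Bs with hB
    have hBfin : Bs.Finite := by
      apply Set.Finite.subset (Set.finite_range (maxScore p N))
      rintro z ⟨c, _, rfl⟩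
      exact ⟨c, rfl⟩
    have hBne : Bs.Nonempty := by
      obtain ⟨c, hc⟩ := Set.nonempty_iff_ne_empty.mpr hne
      exact ⟨maxScore p N c, c, hc, rfl⟩
    -- upper bound
    have hub : ∀ z ∈ Sset p N u, z ≤ ε + max A B := by
      rintro z ⟨w, hw, C, hC, rfl⟩
      rw [mem_subtree_iff] at hw
      by_cases hwu : w = u
      · -- w = u : bounded by ε + A
        rw [hwu] at hC ⊢
        have hCne : u ∉ ⋃ c ∈ C, subtree p c := not_mem_biUnion hp hC
        rw [pathUnion_self hp, sc_insert hCne]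
        have hCfin : C.Finite := Set.toFinite C
        have hCcoe : (hCfin.toFinset : Set V) = C := hCfin.coe_toFinset
        have hsum : sc N (⋃ c ∈ C, subtree p c) = ∑ c ∈ hCfin.toFinset, cc p N c := by
          conv_lhs => rw [← hCcoe]
          exact sc_biUnion_children hp N hCfin.toFinset
            (fun c hc => hC (by rwa [← hCfin.mem_toFinset]))
        rw [hsum]
        have hle1 : ∑ c ∈ hCfin.toFinset, cc p N c ≤
            ∑ c ∈ hCfin.toFinset, max (cc p N c) 0 :=
          Finset.sum_le_sum fun c _ => le_max_left _ _
        have hle2 : ∑ c ∈ hCfin.toFinset, max (cc p N c) 0 ≤ A := by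
          apply Finset.sum_le_sum_of_subset_of_nonneg
          · intro c hc
            rw [mem_childrenFinset]
            exact hC (by rwa [← hCfin.mem_toFinset])
          · intro c _ _
            exact le_max_right _ _
        have := hle1.trans hle2
        have hAB : A ≤ max A B := le_max_left A B
        omega
      · -- w ≠ u : bounded by ε + B
        obtain ⟨c₀, hc₀, hc₀w⟩ := exists_child_of_mem_subtree hw hwu
        rw [pathUnion_split hp hc₀ hc₀w, sc_insert (not_mem_pathUnion hp hc₀ hc₀w hC)]
        have hz : sc N (pathUnion p c₀ w C) ∈ Sset p N c₀ :=
          ⟨w, mem_subtree_iff.mpr hc₀w, C, hC, rfl⟩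
        have h1 : sc N (pathUnion p c₀ w C) ≤ maxScore p N c₀ := le_maxScore hz
        have h2 : maxScore p N c₀ ≤ B :=
          le_csSup hBfin.bddAbove ⟨c₀, hc₀, rfl⟩
        have hBB : B ≤ max A B := le_max_right A B
        omega
    -- lower bounds
    have hlbA : ε + A ∈ Sset p N u := by
      set s : Finset V := (childrenFinset p u).filter (fun c => 0 < cc p N c) with hsdef
      have hsc : (s : Set V) ⊆ children p u := by
        intro c hc
        simp only [hsdef, Finset.coe_filter, Set.mem_setOf_eq, Finset.mem_coe] at hc
        exact mem_childrenFinset.mp hc.1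
      refine ⟨u, Or.inl rfl, (s : Set V), hsc, ?_⟩
      rw [pathUnion_self hp, sc_insert (not_mem_biUnion hp hsc),
        sc_biUnion_children hp N s (fun c hc => hsc (Finset.mem_coe.mpr hc))]
      congr 1
      rw [hA]
      rw [Finset.sum_filter]
      apply Finset.sum_congr rfl
      intro c _
      by_cases h : 0 < cc p N c
      · rw [if_pos h, max_eq_left h.le]
      · rw [if_neg h, max_eq_right (by omega)]
    have hlbB : ε + B ∈ Sset p N u := by
      have hBmem : B ∈ Bs := Set.Nonempty.csSup_mem hBne hBfin
      obtain ⟨c₀, hc₀, hBc₀⟩ := hBmem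
      obtain ⟨w, hw, C, hC, hwC⟩ := maxScore_mem_Sset p N c₀
      rw [mem_subtree_iff] at hw
      refine ⟨w, mem_subtree_iff.mpr (anc_trans (anc_of_child hc₀) hw), C, hC, ?_⟩
      rw [pathUnion_split hp hc₀ hw, sc_insert (not_mem_pathUnion hp hc₀ hw hC),
        ← hwC, ← hBc₀]
    rw [maxScore_eq_sSup_Sset]
    apply le_antisymm
    · exact csSup_le (Sset_nonempty p N u) hub
    · rcases max_cases A B with ⟨hm, _⟩ | ⟨hm, _⟩
      · rw [hm]
        exact le_csSup (Sset_finite p N u).bddAbove hlbA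
      · rw [hm]
        exact le_csSup (Sset_finite p N u).bddAbove hlbB

/-- The maximum score satisfies the recursion
`s(u) = ε(u) + max(Σ_{c child of u} max(cc(c), 0), max_{c child of u} s(c))`,
where `ε(u) = 1` if `u ∈ N` and `ε(u) = −1` otherwise, and the inner maximum
over children is omitted when `u` has no children; in particular for a leaf
`u`, `s(u) = ε(u)`. -/
theorem maxScore_recursion {V : Type*} [Fintype V] [DecidableEq V]
    (p : V → V) (hp : IsRootedForest p) (N : Set V) (u : V) :
    (children p u = ∅ → maxScore p N u = (if u ∈ N then (1 : ℤ) else -1)) ∧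
    (children p u ≠ ∅ →
      maxScore p N u = (if u ∈ N then (1 : ℤ) else -1) +
        max (∑ c ∈ childrenFinset p u, max (cc p N c) 0)
          (sSup {z : ℤ | ∃ c ∈ children p u, z = maxScore p N c})) := by
  exact maxScore_recursion_aux p hp N u
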